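/- Let ε > 0, let ν be a nonnegative Borel measure on ℝ with ν({0}) = 0 and ν(ℝ \ (0, ε]) = 0 (so ν is concentrated on (0, ε]), and suppose ∫ x dν(x) < ∞ and ν((0, ε]) > 0. Let b ∈ ℝ with b < ∫ x dν(x), and define g(u) := b + ∫ (e^{ux} − 1) x dν(x). Then g has exactly one root: there is a unique u* ∈ ℝ with g(u*) = 0. -/

import Mathlib

/-!
The integrand `(e^{ux} − 1) x` is increasing in `u`, strictly so for `x ≠ 0`, and on the bounded
support it is dominated, locally uniformly in `u`, by a multiple of `|x|`. Hence `g` is continuous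
and strictly increasing. As `u → −∞`, dominated convergence gives `g u → b − ∫ x dν < 0`, while
`e^{ux} − 1 ≥ ux` gives `g u ≥ b + u ∫ x² dν → ∞`; the intermediate value theorem supplies the root.
-/

open MeasureTheory Real Set Filter Topology

/-- The jump part of the paper's `g u = b + esscherIntegral ν u`. -/
noncomputable def esscherIntegral (ν : Measure ℝ) (u : ℝ) : ℝ :=
  ∫ x, (exp (u * x) - 1) * x ∂ν

lemma norm_exp_mul_sub_one_mul_le {u C R x : ℝ} (hu : |u| ≤ C) (hx : |x| ≤ R) :
    ‖(exp (u * x) - 1) * x‖ ≤ (exp (C * R) + 1) * |x| := by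
  have hux : u * x ≤ C * R := by
    calc u * x ≤ |u * x| := le_abs_self _
      _ = |u| * |x| := abs_mul u x
      _ ≤ C * R := mul_le_mul hu hx (abs_nonneg x) ((abs_nonneg u).trans hu)
  have hexp : |exp (u * x) - 1| ≤ exp (C * R) + 1 := by
    rw [abs_le]
    constructor <;> nlinarith [exp_pos (u * x), exp_pos (C * R), exp_le_exp.mpr hux]
  rw [norm_mul, norm_eq_abs, norm_eq_abs]
  exact mul_le_mul_of_nonneg_right hexp (abs_nonneg x)

lemma exp_mul_sub_one_mul_lt_of_ne_zero {u v x : ℝ} (huv : u < v) (hx : x ≠ 0) :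
    (exp (u * x) - 1) * x < (exp (v * x) - 1) * x := by
  rcases hx.lt_or_gt with hx | hx
  · nlinarith [exp_lt_exp.mpr (show v * x < u * x by nlinarith)]
  · nlinarith [exp_lt_exp.mpr (show u * x < v * x by nlinarith)]

lemma exp_mul_sub_one_mul_le_of_le {u v : ℝ} (huv : u ≤ v) (x : ℝ) :
    (exp (u * x) - 1) * x ≤ (exp (v * x) - 1) * x := by
  rcases huv.lt_or_eq with huv | rfl
  · rcases eq_or_ne x 0 with rfl | hx
    · simp
    · exact (exp_mul_sub_one_mul_lt_of_ne_zero huv hx).le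
  · rfl

section esscherIntegral

variable {ν : Measure ℝ} {R : ℝ}

lemma integrable_exp_mul_sub_one_mul (hbdd : ∀ᵐ x ∂ν, |x| ≤ R)
    (hmom : Integrable (fun x : ℝ => x) ν) (u : ℝ) :
    Integrable (fun x : ℝ => (exp (u * x) - 1) * x) ν := by
  refine (hmom.abs.const_mul (exp (|u| * R) + 1)).mono' (by fun_prop) ?_
  filter_upwards [hbdd] with x hx
  exact norm_exp_mul_sub_one_mul_le le_rfl hx

lemma continuous_esscherIntegral (hbdd : ∀ᵐ x ∂ν, |x| ≤ R)
    (hmom : Integrable (fun x : ℝ => x) ν) : Continuous (esscherIntegral ν) := by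
  refine continuous_iff_continuousAt.mpr fun u₀ => ?_
  refine continuousAt_of_dominated (bound := fun x => (exp ((|u₀| + 1) * R) + 1) * |x|)
    (Eventually.of_forall fun u => by fun_prop)
    ?_ (hmom.abs.const_mul _)
    (Eventually.of_forall fun x => by fun_prop)
  filter_upwards [Metric.ball_mem_nhds u₀ one_pos] with u hu
  filter_upwards [hbdd] with x hx
  refine norm_exp_mul_sub_one_mul_le ?_ hx
  have : |u - u₀| < 1 := by simpa [Real.dist_eq] using hu
  linarith [abs_sub_abs_le_abs_sub u u₀]

lemma strictMono_esscherIntegral (hbdd : ∀ᵐ x ∂ν, |x| ≤ R)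
    (hmom : Integrable (fun x : ℝ => x) ν) (hpos : 0 < ν {0}ᶜ) :
    StrictMono (esscherIntegral ν) := by
  intro u v huv
  have hint := integrable_exp_mul_sub_one_mul hbdd hmom
  have hdiff : 0 < ∫ x, ((exp (v * x) - 1) * x - (exp (u * x) - 1) * x) ∂ν := by
    refine (integral_pos_iff_support_of_nonneg
      (fun x => sub_nonneg.mpr (exp_mul_sub_one_mul_le_of_le huv.le x))
      ((hint v).sub (hint u))).mpr (hpos.trans_le (measure_mono fun x hx => ?_))
    exact (sub_pos.mpr (exp_mul_sub_one_mul_lt_of_ne_zero huv hx)).ne'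
  rw [integral_sub (hint v) (hint u)] at hdiff
  exact sub_pos.mp hdiff

lemma tendsto_esscherIntegral_atBot (hnonneg : ∀ᵐ x ∂ν, 0 ≤ x)
    (hmom : Integrable (fun x : ℝ => x) ν) :
    Tendsto (esscherIntegral ν) atBot (𝓝 (-∫ x, x ∂ν)) := by
  rw [← integral_neg]
  refine tendsto_integral_filter_of_dominated_convergence (fun x => x)
    (Eventually.of_forall fun u => by fun_prop)
    ?_ hmom ?_
  · filter_upwards [eventually_le_atBot (0 : ℝ)] with u hu
    filter_upwards [hnonneg] with x hx
    have hexp : exp (u * x) ≤ 1 := exp_le_one_iff.mpr (mul_nonpos_of_nonpos_of_nonneg hu hx)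
    rw [norm_mul, norm_eq_abs, norm_eq_abs, abs_of_nonneg hx,
      abs_of_nonpos (sub_nonpos.mpr hexp)]
    nlinarith [exp_pos (u * x)]
  · filter_upwards [hnonneg] with x hx
    rcases hx.eq_or_lt with rfl | hx
    · simp
    · have hexp : Tendsto (fun u : ℝ => exp (u * x)) atBot (𝓝 0) :=
        tendsto_exp_atBot.comp (tendsto_id.atBot_mul_const hx)
      simpa using (hexp.sub_const 1).mul_const x

lemma tendsto_esscherIntegral_atTop (hbdd : ∀ᵐ x ∂ν, |x| ≤ R) (hnonneg : ∀ᵐ x ∂ν, 0 ≤ x)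
    (hmom : Integrable (fun x : ℝ => x) ν) (hpos : 0 < ν {0}ᶜ) :
    Tendsto (esscherIntegral ν) atTop atTop := by
  have hsq : Integrable (fun x : ℝ => x ^ 2) ν := by
    refine (hmom.abs.const_mul R).mono' (continuous_pow 2).aestronglyMeasurable ?_
    filter_upwards [hbdd] with x hx
    rw [norm_eq_abs, abs_pow, sq]
    exact mul_le_mul_of_nonneg_right hx (abs_nonneg x)
  have hsq_pos : 0 < ∫ x, x ^ 2 ∂ν := by
    exact (integral_pos_iff_support_of_nonneg (fun x => sq_nonneg x) hsq).mpr
      (hpos.trans_le (measure_mono fun x hx => pow_ne_zero 2 hx))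
  refine tendsto_atTop_mono (fun u => ?_) (tendsto_id.atTop_mul_const hsq_pos)
  rw [id, ← integral_const_mul]
  refine integral_mono_ae (hsq.const_mul u) (integrable_exp_mul_sub_one_mul hbdd hmom u) ?_
  filter_upwards [hnonneg] with x hx
  nlinarith [add_one_le_exp (u * x)]

end esscherIntegral

lemma StrictMono.existsUnique_eq_zero {f : ℝ → ℝ} (hmono : StrictMono f) (hcont : Continuous f)
    {a b : ℝ} (ha : f a < 0) (hb : 0 < f b) : ∃! u, f u = 0 := by
  obtain ⟨u, -, hu⟩ := intermediate_value_Icc (hmono.lt_iff_lt.mp (ha.trans hb)).le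
    hcont.continuousOn (⟨ha.le, hb.le⟩ : (0 : ℝ) ∈ Icc (f a) (f b))
  exact ⟨u, hu, fun v hv => hmono.injective (hv.trans hu.symm)⟩

theorem stmt_18_general (ε : ℝ) (ν : Measure ℝ)
    (hsupp : ν (Ioc (0 : ℝ) ε)ᶜ = 0)
    (hmom : Integrable (fun x : ℝ => x) ν)
    (hpos : 0 < ν (Ioc (0 : ℝ) ε))
    (b : ℝ) (hb : b < ∫ x, x ∂ν)
    (g : ℝ → ℝ)
    (hg : ∀ u : ℝ, g u = b + ∫ x, (Real.exp (u * x) - 1) * x ∂ν) :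
    ∃! u : ℝ, g u = 0 := by
  have hae : ∀ᵐ x ∂ν, x ∈ Ioc (0 : ℝ) ε := mem_ae_iff.mpr hsupp
  have hbdd : ∀ᵐ x ∂ν, |x| ≤ ε := by
    filter_upwards [hae] with x hx
    rw [abs_of_pos hx.1]
    exact hx.2
  have hnonneg : ∀ᵐ x ∂ν, 0 ≤ x := by
    filter_upwards [hae] with x hx
    exact hx.1.le
  have hpos' : 0 < ν {0}ᶜ := hpos.trans_le (measure_mono fun x hx => hx.1.ne')
  have hg' : g = fun u => b + esscherIntegral ν u := funext hg
  have hbot : ∀ᶠ u in atBot, g u < 0 := by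
    rw [hg']
    exact ((tendsto_esscherIntegral_atBot hnonneg hmom).const_add b).eventually
      (gt_mem_nhds (by linarith))
  have htop : ∀ᶠ u in atTop, 0 < g u := by
    rw [hg']
    exact (tendsto_atTop_add_const_left atTop b
      (tendsto_esscherIntegral_atTop hbdd hnonneg hmom hpos')).eventually_gt_atTop 0
  obtain ⟨u₁, hu₁⟩ := hbot.exists
  obtain ⟨u₂, hu₂⟩ := htop.exists
  rw [hg'] at hu₁ hu₂ ⊢
  exact StrictMono.existsUnique_eq_zero
    (fun u v huv => (add_lt_add_iff_left b).mpr (strictMono_esscherIntegral hbdd hmom hpos' huv))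
    (continuous_const.add (continuous_esscherIntegral hbdd hmom)) hu₁ hu₂

/-- Case 3(b) in the proof of Lemma 3.2: for a nonzero Lévy measure `ν` concentrated on
`(0, ε]` with finite first moment and `b < ∫ x dν`, the function
`g(u) = b + ∫ (e^{ux} − 1)x dν` has exactly one root. -/
theorem stmt_18 (ε : ℝ) (hε : 0 < ε) (ν : Measure ℝ) (hν0 : ν {0} = 0)
    (hsupp : ν (Ioc (0 : ℝ) ε)ᶜ = 0)
    (hmom : Integrable (fun x : ℝ => x) ν)
    (hpos : 0 < ν (Ioc (0 : ℝ) ε))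
    (b : ℝ) (hb : b < ∫ x, x ∂ν)
    (g : ℝ → ℝ)
    (hg : ∀ u : ℝ, g u = b + ∫ x, (Real.exp (u * x) - 1) * x ∂ν) :
    ∃! u : ℝ, g u = 0 :=
  stmt_18_general ε ν hsupp hmom hpos b hb g hg
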